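/- Let A be a finite dimensional k-algebra with universal coacting bialgebra a(A). The map γ : Hom_{Alg}(a(A), k) → End_{Alg}(A), γ(θ)(e_i) = Σ_s θ(x_{si}) e_s, is an isomorphism of monoids, where Hom_{Alg}(a(A), k) carries the convolution product (θ_1 ⋆ θ_2)(x_{sj}) = Σ_t θ_1(x_{st}) θ_2(x_{tj}) with unit ε, and End_{Alg}(A) is the monoid of unital algebra endomorphisms of A under composition. -/

import Mathlib

open TensorProduct

noncomputable section

variable (k : Type) [Field k]

/-- The relations defining the quantum symmetry semigroup `a(A)` of a finite dimensional
algebra `A` with basis `e` (with `e 0 = 1`), in terms of the structure constants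
`τ i j s = e.repr (e i * e j) s`. -/
inductive ARel {A : Type} [Ring A] [Algebra k A] {n : ℕ} [NeZero n]
    (e : Module.Basis (Fin n) k A) :
    FreeAlgebra k (Fin n × Fin n) → FreeAlgebra k (Fin n × Fin n) → Prop
  | mul (a i j : Fin n) :
      ARel e (∑ u, e.repr (e i * e j) u • FreeAlgebra.ι k (a, u))
        (∑ s, ∑ t, e.repr (e s * e t) a • (FreeAlgebra.ι k (s, i) * FreeAlgebra.ι k (t, j)))
  | unit (a : Fin n) :
      ARel e (FreeAlgebra.ι k (a, (0 : Fin n))) (if a = 0 then 1 else 0)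

/-- The quantum symmetry semigroup `a(A)`. -/
abbrev aA {A : Type} [Ring A] [Algebra k A] {n : ℕ} [NeZero n] (e : Module.Basis (Fin n) k A) :=
  RingQuot (ARel k e)

/-- The generators `x_{s i}` of `a(A)`. -/
def xg {A : Type} [Ring A] [Algebra k A] {n : ℕ} [NeZero n] (e : Module.Basis (Fin n) k A)
    (s i : Fin n) : aA k e :=
  RingQuot.mkAlgHom k (ARel k e) (FreeAlgebra.ι k (s, i))

/-- The canonical map `η_A : A → A ⊗ a(A)`, `e i ↦ ∑ s, e s ⊗ x_{s i}`, as a linear map. -/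
def etaA {A : Type} [Ring A] [Algebra k A] {n : ℕ} [NeZero n] (e : Module.Basis (Fin n) k A) :
    A →ₗ[k] A ⊗[k] aA k e :=
  (e.constr k) fun i => ∑ s, e s ⊗ₜ[k] xg k e s i


variable {A : Type} [Ring A] [Algebra k A] {n : ℕ} [NeZero n]

/-- The convolution product on `Hom_Alg(a(A), k) = G(a(A)^o)`, defined via the
comultiplication `Δ` of `a(A)`. -/
def conv (e : Module.Basis (Fin n) k A) (Δ : aA k e →ₐ[k] aA k e ⊗[k] aA k e)
    (θ₁ θ₂ : aA k e →ₐ[k] k) : aA k e →ₐ[k] k :=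
  (Algebra.TensorProduct.lmul' k (S := k)).comp ((Algebra.TensorProduct.map θ₁ θ₂).comp Δ)

lemma coeff_mul (e : Module.Basis (Fin n) k A) (x y : A) (a : Fin n) :
    e.repr (x * y) a = ∑ s, ∑ t, e.repr (e s * e t) a * (e.repr x s * e.repr y t) := by
  conv_lhs => rw [← e.sum_repr x, ← e.sum_repr y]
  rw [Finset.sum_mul_sum]
  simp only [smul_mul_smul_comm, map_sum, map_smul, Finset.sum_apply', Finsupp.smul_apply,
    smul_eq_mul]
  exact Finset.sum_congr rfl fun s _ => Finset.sum_congr rfl fun t _ => mul_comm _ _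

lemma theta_mul_rel (e : Module.Basis (Fin n) k A) (θ : aA k e →ₐ[k] k) (a i j : Fin n) :
    ∑ u, e.repr (e i * e j) u * θ (xg k e a u) =
      ∑ s, ∑ t, e.repr (e s * e t) a * (θ (xg k e s i) * θ (xg k e t j)) := by
  have h := congrArg θ (RingQuot.mkAlgHom_rel k (ARel.mul (e := e) a i j))
  simpa only [map_sum, map_smul, map_mul, smul_eq_mul, xg] using h

lemma theta_unit_rel (e : Module.Basis (Fin n) k A) (θ : aA k e →ₐ[k] k) (a : Fin n) :
    θ (xg k e a 0) = if a = 0 then 1 else 0 := by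
  have h := congrArg θ (RingQuot.mkAlgHom_rel k (ARel.unit (e := e) a))
  rw [xg, h]
  split <;> simp

/-- The map `γ : Hom_Alg(a(A), k) → End_Alg(A)`,
`γ(θ)(e_i) = ∑ s θ(x_{si}) e_s`, is an isomorphism of monoids, where the source carries the
convolution product with unit `ε` and the target is the monoid of unital algebra
endomorphisms of `A` under composition. -/
theorem gamma_monoid_iso (e : Module.Basis (Fin n) k A) (he : e 0 = 1)
    (Δ : aA k e →ₐ[k] aA k e ⊗[k] aA k e) (ε : aA k e →ₐ[k] k)
    (hΔ : ∀ i j, Δ (xg k e i j) = ∑ s, xg k e i s ⊗ₜ[k] xg k e s j)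
    (hε : ∀ i j, ε (xg k e i j) = if i = j then 1 else 0) :
    ∃ γ : (aA k e →ₐ[k] k) → (A →ₐ[k] A),
      (∀ θ i, γ θ (e i) = ∑ s, θ (xg k e s i) • e s) ∧
      Function.Bijective γ ∧
      (∀ θ₁ θ₂, γ (conv k e Δ θ₁ θ₂) = (γ θ₁).comp (γ θ₂)) ∧
      γ ε = AlgHom.id k A := by
  classical
  set L : (aA k e →ₐ[k] k) → (A →ₗ[k] A) :=
    fun θ => e.constr k fun i => ∑ s, θ (xg k e s i) • e s with hLdef
  have hL : ∀ θ i, L θ (e i) = ∑ s, θ (xg k e s i) • e s := fun θ i => e.constr_basis k _ i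
  have hrepr : ∀ θ (i s : Fin n), e.repr (L θ (e i)) s = θ (xg k e s i) := by
    intro θ i s
    rw [hL]
    simp [map_sum, map_smul, Finset.sum_apply', Finsupp.smul_apply, Finsupp.single_apply,
      Finset.sum_ite_eq', mul_comm]
  have hLone : ∀ θ, L θ 1 = 1 := by
    intro θ
    have h0 : L θ (e 0) = e 0 := by
      rw [hL]
      simp [theta_unit_rel, ite_smul, Finset.sum_ite_eq']
    rwa [he] at h0
  have hLmulb : ∀ θ (i j : Fin n), L θ (e i * e j) = L θ (e i) * L θ (e j) := by
    intro θ i j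
    apply e.ext_elem_iff.mpr
    intro a
    rw [coeff_mul k e]
    simp only [hrepr]
    rw [← theta_mul_rel k e θ a i j]
    conv_lhs => rw [show e i * e j = ∑ u, e.repr (e i * e j) u • e u from (e.sum_repr _).symm]
    simp only [map_sum, map_smul, Finsupp.coe_finset_sum, Finset.sum_apply, Finsupp.smul_apply, hrepr, smul_eq_mul]
  have hLmul : ∀ θ (x y : A), L θ (x * y) = L θ x * L θ y := by
    intro θ x y
    have key : (LinearMap.mul k A).compr₂ (L θ)
        = (LinearMap.mul k A).compl₁₂ (L θ) (L θ) := by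
      refine e.ext fun i => e.ext fun j => ?_
      simp only [LinearMap.compr₂_apply, LinearMap.compl₁₂_apply, LinearMap.mul_apply']
      exact hLmulb θ i j
    exact congrFun (congrArg DFunLike.coe (LinearMap.congr_fun key x)) y
  set G : (aA k e →ₐ[k] k) → (A →ₐ[k] A) :=
    fun θ => AlgHom.ofLinearMap (L θ) (hLone θ) (hLmul θ) with hGdef
  have hGL : ∀ θ x, G θ x = L θ x := fun _ _ => rfl
  -- the inverse map
  have hrel : ∀ (f : A →ₐ[k] A), ∀ ⦃x y : FreeAlgebra k (Fin n × Fin n)⦄, ARel k e x y →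
      (FreeAlgebra.lift k fun p : Fin n × Fin n => e.repr (f (e p.2)) p.1) x
        = (FreeAlgebra.lift k fun p : Fin n × Fin n => e.repr (f (e p.2)) p.1) y := by
    intro f x y h
    induction h with
    | mul a i j =>
      simp only [map_sum, map_smul, map_mul, FreeAlgebra.lift_ι_apply, smul_eq_mul]
      rw [← coeff_mul k e, ← map_mul f]
      conv_rhs => rw [show e i * e j = ∑ u, e.repr (e i * e j) u • e u from (e.sum_repr _).symm]
      simp only [map_sum, map_smul, Finsupp.coe_finset_sum, Finset.sum_apply, Finsupp.smul_apply, smul_eq_mul]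
    | unit a =>
      simp only [FreeAlgebra.lift_ι_apply, apply_ite, map_one, map_zero]
      rw [he, map_one, show (1 : A) = e 0 from he.symm, Module.Basis.repr_self]
      by_cases h : a = 0 <;> simp [h, Finsupp.single_apply, eq_comm]
  set D : (A →ₐ[k] A) → (aA k e →ₐ[k] k) :=
    fun f => RingQuot.liftAlgHom k
      ⟨FreeAlgebra.lift k fun p : Fin n × Fin n => e.repr (f (e p.2)) p.1, hrel f⟩ with hDdef
  have hDx : ∀ f s i, D f (xg k e s i) = e.repr (f (e i)) s := by
    intro f s i
    rw [hDdef, xg]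
    erw [RingQuot.liftAlgHom_mkAlgHom_apply]
    simp [FreeAlgebra.lift_ι_apply]
  have hDG : ∀ θ, D (G θ) = θ := by
    intro θ
    apply RingQuot.ringQuot_ext'
    apply FreeAlgebra.hom_ext
    funext p
    show D (G θ) (xg k e p.1 p.2) = θ (xg k e p.1 p.2)
    rw [hDx]
    rw [show (G θ) (e p.2) = L θ (e p.2) from rfl]
    exact hrepr θ p.2 p.1
  have hGD : ∀ f, G (D f) = f := by
    intro f
    apply AlgHom.toLinearMap_injective
    refine e.ext fun i => ?_
    show G (D f) (e i) = f (e i)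
    rw [hGL, hL]
    simp only [hDx]
    exact e.sum_repr (f (e i))
  have hconvx : ∀ (θ₁ θ₂ : aA k e →ₐ[k] k) (s i : Fin n),
      conv k e Δ θ₁ θ₂ (xg k e s i) = ∑ t, θ₁ (xg k e s t) * θ₂ (xg k e t i) := by
    intro θ₁ θ₂ s i
    simp [conv, hΔ, map_sum]
  refine ⟨G, fun θ i => by rw [hGL, hL], ?_, ?_, ?_⟩
  · exact Function.bijective_iff_has_inverse.mpr ⟨D, hDG, hGD⟩
  · intro θ₁ θ₂
    apply AlgHom.toLinearMap_injective
    refine e.ext fun i => ?_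
    show G (conv k e Δ θ₁ θ₂) (e i) = G θ₁ (G θ₂ (e i))
    rw [hGL, hL, hGL, hGL, hL, map_sum]
    simp only [map_smul, hL, hconvx, Finset.smul_sum, smul_smul]
    rw [Finset.sum_comm]
    exact Finset.sum_congr rfl fun s _ => by
      rw [← Finset.sum_smul]
      exact congrArg (· • e s) (Finset.sum_congr rfl fun t _ => mul_comm _ _)
  · apply AlgHom.toLinearMap_injective
    refine e.ext fun i => ?_
    show G ε (e i) = e i
    rw [hGL, hL]
    simp [hε, ite_smul, Finset.sum_ite_eq']


end
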